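/- Betweenness centrality behaves as follows under edge flips. (i) If i and j lie in different connected components of g and ij ∉ g, then C_btw(i, g+ij) ≥ C_btw(i, g), and the inequality is strict unless i is isolated in g. (ii) If ij is a bridge edge of g (its removal disconnects i from j), then in the betweenness centrality game there exists c₀ > 0 such that deleting ij strictly increases i's utility at every cost c ∈ (0, c₀) if and only if deg_g(i) = 1. (iii) If ij ∉ g and i and j lie in the same connected component of g, then C_btw(i, g+ij) ≥ C_btw(i, g). -/

import Mathlib

open SimpleGraph

/-- Degree of vertex `i` in network `g`. -/
noncomputable def deg {V : Type*} (g : SimpleGraph V) (i : V) : ℕ :=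
  Nat.card (g.neighborSet i)

/-- The network `g` with the (missing) edge `ij` added. -/
def addE {V : Type*} (g : SimpleGraph V) (i j : V) : SimpleGraph V :=
  g ⊔ SimpleGraph.fromEdgeSet {s(i, j)}

/-- The network `g` with the edge `ij` removed. -/
def delE {V : Type*} (g : SimpleGraph V) (i j : V) : SimpleGraph V :=
  g.deleteEdges {s(i, j)}

/-- Utility of agent `i` in the game with centralities `C` and edge cost `c`. -/
noncomputable def util {V : Type*} (C : V → SimpleGraph V → ℝ) (c : ℝ) (i : V)
    (g : SimpleGraph V) : ℝ :=
  C i g - c * (deg g i)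

/-- Adding the missing edge `ij` is an improving move. -/
def ImprovingAdd {V : Type*} (C : V → SimpleGraph V → ℝ) (c : ℝ) (g : SimpleGraph V)
    (i j : V) : Prop :=
  util C c i (addE g i j) ≥ util C c i g ∧ util C c j (addE g i j) ≥ util C c j g ∧
    (util C c i (addE g i j) > util C c i g ∨ util C c j (addE g i j) > util C c j g)

/-- Deleting the edge `ij` is an improving move. -/
def ImprovingDel {V : Type*} (C : V → SimpleGraph V → ℝ) (c : ℝ) (g : SimpleGraph V)
    (i j : V) : Prop :=
  util C c i (delE g i j) > util C c i g ∨ util C c j (delE g i j) > util C c j g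

/-- `g` is pairwise stable at edge cost `c`. -/
def PairwiseStable {V : Type*} (C : V → SimpleGraph V → ℝ) (c : ℝ) (g : SimpleGraph V) : Prop :=
  (∀ i j : V, i ≠ j → ¬ g.Adj i j → ¬ ImprovingAdd C c g i j) ∧
  (∀ i j : V, g.Adj i j → ¬ ImprovingDel C c g i j)

/-- `g` is asymptotically pairwise stable. -/
def APSN {V : Type*} (C : V → SimpleGraph V → ℝ) (g : SimpleGraph V) : Prop :=
  ∃ ε₀ : ℝ, 0 < ε₀ ∧ ∀ c : ℝ, 0 < c → c < ε₀ → PairwiseStable C c g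

/-- Axiom 1: the centrality of agent `i` is increasing. -/
def Axiom1 {V : Type*} (C : V → SimpleGraph V → ℝ) (i : V) : Prop :=
  ∀ (g : SimpleGraph V) (j : V), j ≠ i → ¬ g.Adj i j → C i (addE g i j) > C i g

/-- Axiom 1′: the centrality of agent `i` is decreasing. -/
def Axiom1' {V : Type*} (C : V → SimpleGraph V → ℝ) (i : V) : Prop :=
  ∀ (g : SimpleGraph V) (j : V), j ≠ i → ¬ g.Adj i j → C i (addE g i j) < C i g

/-- Axiom 2: the centrality of agent `i` is componentwise. -/
def Axiom2 {V : Type*} (C : V → SimpleGraph V → ℝ) (i : V) : Prop :=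
  ∀ (g : SimpleGraph V) (j : V), j ≠ i → ¬ g.Adj i j →
    ((g.Reachable i j → C i (addE g i j) > C i g) ∧
     (¬ g.Reachable i j → C i (addE g i j) ≤ C i g))

/-- Axiom 2′: the centrality of agent `i` is peripheral. -/
def Axiom2' {V : Type*} (C : V → SimpleGraph V → ℝ) (i : V) : Prop :=
  ∀ (g : SimpleGraph V) (j : V), j ≠ i → ¬ g.Adj i j →
    ((g.Reachable i j → C i (addE g i j) ≤ C i g) ∧
     (¬ g.Reachable i j → C i (addE g i j) > C i g))

/-- The centrality of agent `i` is degree homophilic with (strictly increasing) `f`. -/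
def DegreeHomophilic {V : Type*} (C : V → SimpleGraph V → ℝ) (i : V) (f : ℕ → ℤ) : Prop :=
  ∀ (g : SimpleGraph V) (j : V), j ≠ i → ¬ g.Adj i j →
    (C i (addE g i j) > C i g ↔ (deg g j : ℤ) ≤ f (deg g i))

/-- The number of shortest paths between `y` and `z` in `g`
(`0` if `y` and `z` are in different components). -/
noncomputable def sigmaAll {V : Type*} (g : SimpleGraph V) (y z : V) : ℕ :=
  Nat.card {p : g.Path y z // p.1.length = g.dist y z}

/-- The number of shortest paths between `y` and `z` in `g` passing through `i`. -/
noncomputable def sigmaThr {V : Type*} (g : SimpleGraph V) (y z i : V) : ℕ :=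
  Nat.card {p : g.Path y z // p.1.length = g.dist y z ∧ i ∈ p.1.support}

open scoped Classical in
/-- Betweenness centrality of `i` in `g`: the sum over unordered pairs `{y,z} ⊆ V∖{i}`
of `σ_yz(i)/σ_yz(g)` (summands with `σ_yz(g) = 0` vanish, since `x/0 = 0` in `ℝ`). -/
noncomputable def btw {V : Type*} [Fintype V] (g : SimpleGraph V) (i : V) : ℝ :=
  (1 / 2) * ∑ y : V, ∑ z : V,
    if y ≠ z ∧ y ≠ i ∧ z ≠ i then (sigmaThr g y z i : ℝ) / (sigmaAll g y z : ℝ) else 0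

/-! Write `δ_yz(i) = σ_yz(i) / σ_yz` (the pair dependency) for the share of shortest `y`–`z`
paths through `i`. When `y` and `z` are connected, `δ_yz(i) = 1 - a_yz(i) / σ_yz`, where `a_yz(i)`
counts the shortest paths avoiding `i`. Adding edges at `i` does not change the paths avoiding
`i`. So either `d(y, z)` drops, and then no shortest path avoids `i` and `δ_yz(i)` becomes `1`,
or `d(y, z)` stays, `a_yz(i)` stays and `σ_yz` can only grow. Either way `δ_yz(i)` does not
decrease, which gives (i) and (iii). If `i` has a neighbour `k` and `j` lies in another
component, the pair `(k, j)` goes from `δ = 0` to `δ = 1`, whence strictness in (i).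

For (ii), deleting `ij` saves `c` and changes the betweenness of `i` by `btw(g - ij) - btw(g)`,
so for all small `c` the deletion pays iff this difference is `≥ 0`. A vertex of degree `≤ 1` is
interior to no path, so the difference is `0` when `deg i = 1`; when `deg i ≥ 2` the strict part
of (i), applied to `g - ij`, makes it negative. -/

open SimpleGraph

section PathCounting

variable {V : Type*} {G G' : SimpleGraph V} {i y z : V}

lemma SimpleGraph.Walk.edges_subset_edgeSet_of_notMem_support
    (hnew : ∀ a b, a ≠ i → b ≠ i → G'.Adj a b → G.Adj a b) {p : G'.Walk y z}
    (hi : i ∉ p.support) : ∀ e ∈ p.edges, e ∈ G.edgeSet := by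
  intro e he
  induction e using Sym2.ind with
  | _ a b =>
    exact hnew a b (ne_of_mem_of_not_mem (p.fst_mem_support_of_mem_edges he) hi)
      (ne_of_mem_of_not_mem (p.snd_mem_support_of_mem_edges he) hi) (p.adj_of_mem_edges he)

lemma card_path_length_le_of_le [Finite (G'.Path y z)] (hle : G ≤ G') (d : ℕ) :
    Nat.card {p : G.Path y z // p.1.length = d} ≤ Nat.card {p : G'.Path y z // p.1.length = d} :=
  Nat.card_le_card_of_injective
    (fun p => ⟨⟨p.1.1.mapLe hle, p.1.2.mapLe hle⟩, by simpa using p.2⟩)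
    fun p q hpq => Subtype.ext <| Subtype.ext <|
      Walk.map_injective_of_injective Function.injective_id y z
        (congrArg (fun r => r.1.1) hpq)

lemma card_path_length_avoiding_eq (hle : G ≤ G')
    (hnew : ∀ a b, a ≠ i → b ≠ i → G'.Adj a b → G.Adj a b) (d : ℕ) :
    Nat.card {p : G'.Path y z // p.1.length = d ∧ i ∉ p.1.support} =
      Nat.card {p : G.Path y z // p.1.length = d ∧ i ∉ p.1.support} := by
  refine Nat.card_congr
    { toFun := fun p => ⟨⟨p.1.1.transfer G
          (Walk.edges_subset_edgeSet_of_notMem_support hnew p.2.2), p.1.2.transfer _⟩,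
        by simpa using p.2⟩
      invFun := fun p => ⟨⟨p.1.1.transfer G'
          fun _ he => edgeSet_mono hle (p.1.1.edges_subset_edgeSet he), p.1.2.transfer _⟩,
        by simpa using p.2⟩
      left_inv := fun p => ?_
      right_inv := fun p => ?_ }
  all_goals
    apply Subtype.ext; apply Subtype.ext
    exact Walk.transfer_transfer .. |>.trans (Walk.transfer_self _)

lemma two_le_deg_of_mem_support [Finite V] {p : G.Walk y z} (hp : p.IsPath)
    (hi : i ∈ p.support) (hy : y ≠ i) (hz : z ≠ i) : 2 ≤ deg G i := by
  obtain ⟨n, rfl, hn⟩ := Walk.mem_support_iff_exists_getVert.mp hi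
  have hn0 : n ≠ 0 := by rintro rfl; exact hy (Walk.getVert_zero p).symm
  have hnl : n < p.length := hn.lt_of_ne fun h => hz (h ▸ Walk.getVert_length p).symm
  rw [deg, Nat.card_coe_set_eq, ← hp.ncard_neighborSet_toSubgraph_internal_eq_two hn0 hnl]
  exact Set.ncard_le_ncard (p.toSubgraph.neighborSet_subset _)

end PathCounting

section ShortestPaths

variable {V : Type*} {G G' : SimpleGraph V} {i y z : V}

noncomputable def sigmaAvoid (g : SimpleGraph V) (y z i : V) : ℕ :=
  Nat.card {p : g.Path y z // p.1.length = g.dist y z ∧ i ∉ p.1.support}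

noncomputable def pairDependency (g : SimpleGraph V) (y z i : V) : ℝ :=
  (sigmaThr g y z i : ℝ) / (sigmaAll g y z : ℝ)

instance SimpleGraph.Path.finite [Finite V] (G : SimpleGraph V) (u v : V) :
    Finite (G.Path u v) := by
  classical
  have := Fintype.ofFinite V
  infer_instance

lemma sigmaThr_add_sigmaAvoid [Finite V] (G : SimpleGraph V) (y z i : V) :
    sigmaThr G y z i + sigmaAvoid G y z i = sigmaAll G y z := by
  have := Set.ncard_inter_add_ncard_sdiff_eq_ncard {p : G.Path y z | p.1.length = G.dist y z}
    {p | i ∈ p.1.support}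
  simp only [← Nat.card_coe_set_eq] at this
  exact this

lemma sigmaAll_pos [Finite V] (h : G.Reachable y z) : 0 < sigmaAll G y z := by
  obtain ⟨p, hp, hlen⟩ := h.exists_path_of_dist
  exact Nat.card_pos_iff.mpr ⟨⟨⟨⟨p, hp⟩, hlen⟩⟩, inferInstance⟩

lemma sigmaAll_eq_zero (h : ¬ G.Reachable y z) : sigmaAll G y z = 0 :=
  Nat.card_eq_zero.mpr <| .inl ⟨fun p => h p.1.1.reachable⟩

lemma pairDependency_nonneg (G : SimpleGraph V) (y z i : V) : 0 ≤ pairDependency G y z i := by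
  unfold pairDependency
  positivity

lemma pairDependency_eq_zero (h : ¬ G.Reachable y z) : pairDependency G y z i = 0 := by
  simp [pairDependency, sigmaAll_eq_zero h]

lemma pairDependency_eq_one_sub [Finite V] (h : G.Reachable y z) :
    pairDependency G y z i = 1 - sigmaAvoid G y z i / sigmaAll G y z := by
  have hpos : (0 : ℝ) < sigmaAll G y z := by exact_mod_cast sigmaAll_pos h
  rw [pairDependency, eq_sub_iff_add_eq, ← add_div, div_eq_one_iff_eq hpos.ne']
  exact_mod_cast sigmaThr_add_sigmaAvoid G y z i

lemma pairDependency_mono [Finite V] (hle : G ≤ G')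
    (hnew : ∀ a b, a ≠ i → b ≠ i → G'.Adj a b → G.Adj a b) (y z : V) :
    pairDependency G y z i ≤ pairDependency G' y z i := by
  by_cases hr : G.Reachable y z
  swap
  · rw [pairDependency_eq_zero hr]
    exact pairDependency_nonneg G' y z i
  rw [pairDependency_eq_one_sub hr, pairDependency_eq_one_sub (hr.mono hle)]
  rcases (hr.dist_anti hle).lt_or_eq with hlt | heq
  · have h0 : sigmaAvoid G' y z i = 0 := by
      rw [sigmaAvoid, card_path_length_avoiding_eq hle hnew]
      exact Nat.card_eq_zero.mpr <| .inl ⟨fun p => hlt.not_ge (p.2.1 ▸ dist_le p.1.1)⟩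
    rw [h0, Nat.cast_zero, zero_div, sub_zero]
    exact sub_le_self 1 (by positivity)
  · have havoid : sigmaAvoid G' y z i = sigmaAvoid G y z i := by
      rw [sigmaAvoid, sigmaAvoid, heq, card_path_length_avoiding_eq hle hnew]
    have hall : sigmaAll G y z ≤ sigmaAll G' y z := by
      rw [sigmaAll, sigmaAll, heq]
      exact card_path_length_le_of_le hle _
    rw [havoid]
    gcongr
    exact_mod_cast sigmaAll_pos hr

end ShortestPaths

section Betweenness

variable {V : Type*} [Fintype V] {G G' : SimpleGraph V} {i : V}

lemma btw_le_btw (h : ∀ y z, pairDependency G y z i ≤ pairDependency G' y z i) :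
    btw G i ≤ btw G' i := by
  unfold _root_.btw
  gcongr with y _ z _
  split_ifs
  exacts [h y z, le_rfl]

lemma btw_lt_btw (h : ∀ y z, pairDependency G y z i ≤ pairDependency G' y z i) {y z : V}
    (hyz : y ≠ z) (hy : y ≠ i) (hz : z ≠ i)
    (hlt : pairDependency G y z i < pairDependency G' y z i) : btw G i < btw G' i := by
  unfold _root_.btw
  gcongr 1 / 2 * ?_
  refine Finset.sum_lt_sum (fun y _ => Finset.sum_le_sum fun z _ => ?_)
    ⟨y, Finset.mem_univ _, Finset.sum_lt_sum (fun z _ => ?_) ⟨z, Finset.mem_univ _, ?_⟩⟩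
  · split_ifs
    exacts [h _ _, le_rfl]
  · split_ifs
    exacts [h _ _, le_rfl]
  · rwa [if_pos ⟨hyz, hy, hz⟩, if_pos ⟨hyz, hy, hz⟩]

lemma btw_eq_zero_of_deg_le_one (h : deg G i ≤ 1) : btw G i = 0 := by
  unfold _root_.btw
  refine mul_eq_zero_of_right _ <| Finset.sum_eq_zero fun y _ => Finset.sum_eq_zero fun z _ => ?_
  split_ifs with hyz
  · have : sigmaThr G y z i = 0 := Nat.card_eq_zero.mpr <| .inl
      ⟨fun p => (two_le_deg_of_mem_support p.1.2 p.2.2 hyz.2.1 hyz.2.2).not_gt (by omega)⟩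
    simp [this]
  · rfl

end Betweenness

lemma exists_pos_forall_pos_add_pos_iff (x : ℝ) :
    (∃ c₀ : ℝ, 0 < c₀ ∧ ∀ c : ℝ, 0 < c → c < c₀ → 0 < x + c) ↔ 0 ≤ x := by
  refine ⟨fun ⟨c₀, hc₀, h⟩ => ?_, fun hx => ⟨1, one_pos, fun c hc _ => by linarith⟩⟩
  by_contra! hx
  have hmin : 0 < min c₀ (-x) := lt_min hc₀ (by linarith)
  have := h (min c₀ (-x) / 2) (by positivity) (by linarith [min_le_left c₀ (-x)])
  linarith [min_le_right c₀ (-x)]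

section EdgeFlips

variable {V : Type*} {g : SimpleGraph V} {i j k : V}

lemma le_addE (g : SimpleGraph V) (i j : V) : g ≤ addE g i j := le_sup_left

lemma adj_of_addE_adj {a b : V} (ha : a ≠ i) (hb : b ≠ i) (h : (addE g i j).Adj a b) :
    g.Adj a b := by
  simp_all [addE]

lemma pairDependency_le_pairDependency_addE [Finite V] (g : SimpleGraph V) (i j y z : V) :
    pairDependency g y z i ≤ pairDependency (addE g i j) y z i :=
  pairDependency_mono (le_addE g i j) (fun _ _ ha hb => adj_of_addE_adj ha hb) y z

lemma btw_le_btw_addE [Fintype V] (g : SimpleGraph V) (i j : V) :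
    btw g i ≤ btw (addE g i j) i :=
  btw_le_btw (pairDependency_le_pairDependency_addE g i j)

lemma btw_lt_btw_addE [Fintype V] (hk : g.Adj i k) (hr : ¬ g.Reachable i j) :
    btw g i < btw (addE g i j) i := by
  have hkj : ¬ g.Reachable k j := fun h => hr (hk.reachable.trans h)
  have hne : i ≠ j := fun h => hr (h ▸ .rfl)
  have hadj : (addE g i j).Adj i j := by simp [addE, hne]
  have hr' : (addE g i j).Reachable k j :=
    (hk.symm.reachable.mono (le_addE g i j)).trans hadj.reachable
  have havoid : sigmaAvoid (addE g i j) k j i = 0 := by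
    rw [sigmaAvoid, card_path_length_avoiding_eq (le_addE g i j)
      fun _ _ ha hb => adj_of_addE_adj ha hb]
    exact Nat.card_eq_zero.mpr <| .inl ⟨fun p => hkj p.1.1.reachable⟩
  refine btw_lt_btw (pairDependency_le_pairDependency_addE g i j)
    (fun h : k = j => hkj (h ▸ .rfl)) hk.ne' hne.symm ?_
  rw [pairDependency_eq_zero hkj, pairDependency_eq_one_sub hr', havoid]
  norm_num

lemma addE_delE (h : g.Adj i j) : addE (delE g i j) i j = g := by
  ext a b
  simp only [addE, delE, sup_adj, deleteEdges_adj, fromEdgeSet_adj, Set.mem_singleton_iff,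
    Sym2.eq_iff]
  grind [Adj.ne, Adj.symm]

lemma deg_delE (h : g.Adj i j) : deg (delE g i j) i = deg g i - 1 := by
  have : (delE g i j).neighborSet i = g.neighborSet i \ {j} := by
    ext a
    simp only [delE, mem_neighborSet, deleteEdges_adj, Set.mem_singleton_iff, Set.mem_sdiff,
      Sym2.eq_iff]
    grind [Adj.ne]
  rw [deg, deg, this, Nat.card_coe_set_eq, Nat.card_coe_set_eq,
    Set.ncard_sdiff_singleton_of_mem (show j ∈ g.neighborSet i from h)]

lemma one_le_deg_of_adj [Finite V] (h : g.Adj i j) : 1 ≤ deg g i :=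
  have : Nonempty (g.neighborSet i) := ⟨⟨j, h⟩⟩
  Nat.card_pos

lemma lt_util_delE_iff [Finite V] (C : V → SimpleGraph V → ℝ) (c : ℝ) (h : g.Adj i j) :
    util C c i g < util C c i (delE g i j) ↔ 0 < C i (delE g i j) - C i g + c := by
  simp only [util, deg_delE h, Nat.cast_sub (one_le_deg_of_adj h), Nat.cast_one]
  constructor <;> intro <;> linarith

lemma btw_le_btw_delE_iff [Fintype V] (hij : g.Adj i j) (hr : ¬ (delE g i j).Reachable i j) :
    btw g i ≤ btw (delE g i j) i ↔ deg g i = 1 := by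
  refine ⟨fun hle => ?_, fun hdeg => ?_⟩
  · by_contra hdeg
    have : deg (delE g i j) i ≠ 0 := by
      have := one_le_deg_of_adj hij
      rw [deg_delE hij]
      omega
    obtain ⟨⟨k, hk⟩⟩ := (Nat.card_ne_zero.mp this).1
    have := btw_lt_btw_addE hk hr
    rw [addE_delE hij] at this
    linarith
  · rw [btw_eq_zero_of_deg_le_one hdeg.le,
      btw_eq_zero_of_deg_le_one (by rw [deg_delE hij, hdeg]; exact Nat.sub_le 1 1)]

end EdgeFlips

theorem statement_8 {V : Type*} [Fintype V] (g : SimpleGraph V) :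
    -- (i)
    (∀ i j : V, i ≠ j → ¬ g.Adj i j → ¬ g.Reachable i j →
      btw (addE g i j) i ≥ btw g i ∧
      ((∃ k, g.Adj i k) → btw (addE g i j) i > btw g i)) ∧
    -- (ii)
    (∀ i j : V, g.Adj i j → ¬ (delE g i j).Reachable i j →
      ((∃ c₀ : ℝ, 0 < c₀ ∧ ∀ c : ℝ, 0 < c → c < c₀ →
          util (fun v h => btw h v) c i (delE g i j) > util (fun v h => btw h v) c i g) ↔
        deg g i = 1)) ∧
    -- (iii)
    (∀ i j : V, i ≠ j → ¬ g.Adj i j → g.Reachable i j →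
      btw (addE g i j) i ≥ btw g i) := by
  refine ⟨fun i j _ _ hr => ⟨btw_le_btw_addE g i j, fun ⟨_, hk⟩ => btw_lt_btw_addE hk hr⟩,
    fun i j hij hr => ?_, fun i j _ _ _ => btw_le_btw_addE g i j⟩
  simp_rw [gt_iff_lt, lt_util_delE_iff _ _ hij, exists_pos_forall_pos_add_pos_iff, sub_nonneg]
  exact btw_le_btw_delE_iff hij hr
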